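/- Let n ≥ 6 be an integer and x ≥ 0 a real number. Then the fourth central moment of the second-order modified Baskakov–Durrmeyer operator satisfies V̂_{n,2}((t−x)⁴; x) = (1/((n−2)(n−3)(n−4)(n−5)))·[n²(−12x² − 24x³ − 12x⁴) + n(−156x − 816x² − 1320x³ − 660x⁴) − 144 − 1284x − 4068x² − 5568x³ − 2784x⁴], where the operator is applied to the function t ↦ (t − x)⁴. -/

import Mathlib

open MeasureTheory Filter Topology

/-- Baskakov basis function `p_{n,k}(x) = C(n+k-1, k) x^k / (1+x)^{n+k}`. -/
noncomputable def bask (n k : ℕ) (x : ℝ) : ℝ :=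
  (Nat.choose (n + k - 1) k : ℝ) * x ^ k / (1 + x) ^ (n + k)

/-- Second-order modified basis
`p^2_{n,k}(x) = (3/2 + 2x - n x(1+x)) p_{n+2,k}(x) + 2n x(1+x) p_{n+2,k-1}(x)
  + (-1/2 - 2x - n x(1+x)) p_{n+2,k-2}(x)`, with `p_{n+2,j} = 0` for `j < 0`. -/
noncomputable def p2 (n k : ℕ) (x : ℝ) : ℝ :=
  (3 / 2 + 2 * x - (n : ℝ) * x * (1 + x)) * bask (n + 2) k x
    + 2 * (n : ℝ) * x * (1 + x) * (if k = 0 then 0 else bask (n + 2) (k - 1) x)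
    + (-(1 / 2) - 2 * x - (n : ℝ) * x * (1 + x)) * (if k < 2 then 0 else bask (n + 2) (k - 2) x)

/-- Second-order modified Baskakov–Durrmeyer operator. -/
noncomputable def V2 (n : ℕ) (f : ℝ → ℝ) (x : ℝ) : ℝ :=
  ((n : ℝ) - 1) * ∑' k : ℕ, p2 n k x * ∫ t in Set.Ioi (0 : ℝ), bask n k t * f t

/-!
The Durrmeyer integrals are Beta integrals,
`∫₀^∞ p_{n,k}(t) t^j dt = (k+1)⋯(k+j) / ((n-1)(n-2)⋯(n-1-j))` for `j + 2 ≤ n`, so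
`k ↦ ∫₀^∞ p_{n,k}(t) (t-x)^4 dt` is a polynomial `f` of degree 4 in `k`. Against the Baskakov
weights the binomial coefficients have the moments `∑ₖ p_{N,k}(x) C(k,r) = N(N+1)⋯(N+r-1) x^r / r!`,
so Newton's forward-difference expansion `f(k) = ∑_{r ≤ 4} C(k,r) Δ^r f(0)` sums the series
`∑ₖ p_{N,k}(x) f(k)` in closed form. The three terms of `p2` are this formula with `N = n + 2`
applied to `f`, `f(· + 1)` and `f(· + 2)`; what is left is an identity of rational functions
in `n` and `x`.
-/

open Set Finset
open scoped Nat

lemma tendsto_inv_one_add_pow_atTop {d : ℕ} (hd : d ≠ 0) :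
    Tendsto (fun t : ℝ => ((1 + t) ^ d)⁻¹) atTop (𝓝 0) :=
  ((tendsto_pow_atTop hd).comp (tendsto_atTop_add_const_left _ 1 tendsto_id)).inv_tendsto_atTop

lemma hasDerivAt_inv_one_add_pow (d : ℕ) {t : ℝ} (ht : 1 + t ≠ 0) :
    HasDerivAt (fun s : ℝ => ((1 + s) ^ (d + 1))⁻¹) (-(d + 1) / (1 + t) ^ (d + 2)) t := by
  have h : HasDerivAt (fun s : ℝ => (1 + s) ^ (d + 1)) ((d + 1) * (1 + t) ^ d) t := by
    simpa using ((hasDerivAt_id t).const_add 1).fun_pow (d + 1)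
  refine (h.inv (pow_ne_zero _ ht)).congr_deriv ?_
  field_simp
  ring

lemma hasDerivAt_pow_div_one_add_pow (a c : ℕ) {t : ℝ} (ht : 1 + t ≠ 0) :
    HasDerivAt (fun s : ℝ => s ^ (a + 1) / (1 + s) ^ (c + 1))
      ((a + 1) * t ^ a / (1 + t) ^ (c + 1) - (c + 1) * t ^ (a + 1) / (1 + t) ^ (c + 2)) t := by
  refine ((hasDerivAt_pow (a + 1) t).mul (hasDerivAt_inv_one_add_pow c ht)).congr_deriv ?_
  push_cast
  ring

lemma integrableOn_one_div_one_add_pow_and_integral (b : ℕ) :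
    IntegrableOn (fun t : ℝ => 1 / (1 + t) ^ (b + 2)) (Ioi 0) ∧
      ∫ t in Ioi (0 : ℝ), 1 / (1 + t) ^ (b + 2) = 1 / (b + 1) := by
  have hderiv : ∀ t ∈ Ici (0 : ℝ), HasDerivAt (fun s : ℝ => -((1 + s) ^ (b + 1))⁻¹ / (b + 1))
      (1 / (1 + t) ^ (b + 2)) t := fun t ht => by
    refine (((hasDerivAt_inv_one_add_pow b (by linarith [mem_Ici.mp ht])).neg).div_const
      ((b : ℝ) + 1)).congr_deriv ?_
    field_simp
  have hpos : ∀ t ∈ Ioi (0 : ℝ), 0 ≤ 1 / (1 + t) ^ (b + 2) := fun t ht => by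
    have : 0 < 1 + t := by linarith [mem_Ioi.mp ht]
    positivity
  have hlim : Tendsto (fun s : ℝ => -((1 + s) ^ (b + 1))⁻¹ / (b + 1)) atTop (𝓝 0) := by
    simpa using ((tendsto_inv_one_add_pow_atTop b.succ_ne_zero).neg).div_const ((b : ℝ) + 1)
  refine ⟨integrableOn_Ioi_deriv_of_nonneg' hderiv hpos hlim, ?_⟩
  rw [integral_Ioi_of_hasDerivAt_of_nonneg' hderiv hpos hlim]
  simp [neg_div]

lemma pow_div_one_add_pow_le {t : ℝ} (ht : 0 ≤ t) (a c : ℕ) :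
    t ^ a / (1 + t) ^ (a + c) ≤ 1 / (1 + t) ^ c := by
  have h1t : 0 < 1 + t := by linarith
  rw [pow_add, ← div_div, div_le_div_iff_of_pos_right (by positivity)]
  exact div_le_one_of_le₀ (pow_le_pow_left₀ ht (by linarith) a) (by positivity)

lemma integrableOn_pow_div_one_add_pow (a b : ℕ) :
    IntegrableOn (fun t : ℝ => t ^ a / (1 + t) ^ (a + b + 2)) (Ioi 0) := by
  refine (integrableOn_one_div_one_add_pow_and_integral b).1.mono' ?_ ?_
  · refine ContinuousOn.aestronglyMeasurable (fun t ht => ?_) measurableSet_Ioi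
    have : 0 < 1 + t := by linarith [mem_Ioi.mp ht]
    fun_prop (disch := positivity)
  · filter_upwards [ae_restrict_mem measurableSet_Ioi] with t (ht : 0 < t)
    rw [Real.norm_of_nonneg (by positivity), add_assoc]
    exact pow_div_one_add_pow_le ht.le a (b + 2)

lemma tendsto_pow_div_one_add_pow_atTop (a b : ℕ) :
    Tendsto (fun t : ℝ => t ^ a / (1 + t) ^ (a + b + 1)) atTop (𝓝 0) := by
  refine tendsto_of_tendsto_of_tendsto_of_le_of_le' tendsto_const_nhds
    (by simpa using tendsto_inv_one_add_pow_atTop b.succ_ne_zero) ?_ ?_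
  · filter_upwards [eventually_ge_atTop 0] with t ht
    positivity
  · filter_upwards [eventually_ge_atTop 0] with t ht
    rw [add_assoc, ← one_div]
    exact pow_div_one_add_pow_le ht a (b + 1)

lemma integral_pow_succ_div_one_add_pow (a b : ℕ) :
    (a + b + 2) * ∫ t in Ioi (0 : ℝ), t ^ (a + 1) / (1 + t) ^ (a + 1 + b + 2)
      = (a + 1) * ∫ t in Ioi (0 : ℝ), t ^ a / (1 + t) ^ (a + b + 2) := by
  have hderiv : ∀ t ∈ Ici (0 : ℝ), HasDerivAt (fun s : ℝ => s ^ (a + 1) / (1 + s) ^ (a + b + 2))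
      ((a + 1) * (t ^ a / (1 + t) ^ (a + b + 2))
        - (a + b + 2) * (t ^ (a + 1) / (1 + t) ^ (a + 1 + b + 2))) t := fun t ht => by
    refine (hasDerivAt_pow_div_one_add_pow a (a + b + 1)
      (by linarith [mem_Ici.mp ht])).congr_deriv ?_
    rw [show a + 1 + b + 2 = a + b + 1 + 2 by ring]
    push_cast
    ring
  have hint₀ := (integrableOn_pow_div_one_add_pow a b).const_mul ((a : ℝ) + 1)
  have hint₁ := (integrableOn_pow_div_one_add_pow (a + 1) b).const_mul ((a : ℝ) + b + 2)
  have hlim := tendsto_pow_div_one_add_pow_atTop (a + 1) b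
  rw [show a + 1 + b + 1 = a + b + 2 by ring] at hlim
  have key := integral_Ioi_of_hasDerivAt_of_tendsto' hderiv (hint₀.sub hint₁) hlim
  rw [integral_sub hint₀ hint₁, integral_const_mul, integral_const_mul] at key
  simp only [ne_eq, Nat.add_eq_zero_iff, one_ne_zero, and_false, not_false_eq_true, zero_pow,
    zero_div, sub_zero] at key
  linarith

lemma integral_pow_div_one_add_pow (a b : ℕ) :
    ∫ t in Ioi (0 : ℝ), t ^ a / (1 + t) ^ (a + b + 2) = a ! * b ! / (a + b + 1)! := by
  induction a with
  | zero =>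
    simp only [pow_zero, zero_add, Nat.factorial_zero, Nat.cast_one, one_mul]
    rw [(integrableOn_one_div_one_add_pow_and_integral b).2, Nat.factorial_succ]
    push_cast
    field_simp
  | succ a ih =>
    have hc : (a : ℝ) + b + 2 ≠ 0 := by positivity
    rw [← mul_right_inj' hc, integral_pow_succ_div_one_add_pow, ih,
      show a + 1 + b + 1 = a + b + 1 + 1 by ring, Nat.factorial_succ (a + b + 1),
      Nat.factorial_succ a]
    push_cast
    field_simp
    ring

lemma bask_mul_pow (j m k : ℕ) (t : ℝ) :
    bask (j + m + 2) k t * t ^ j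
      = ((k + (j + m + 1)).choose k : ℝ) * (t ^ (k + j) / (1 + t) ^ (k + j + m + 2)) := by
  rw [bask, show j + m + 2 + k - 1 = k + (j + m + 1) by omega,
    show j + m + 2 + k = k + j + m + 2 by omega]
  ring

lemma integrableOn_bask_mul_pow {n j : ℕ} (hj : j + 2 ≤ n) (k : ℕ) :
    IntegrableOn (fun t => bask n k t * t ^ j) (Ioi 0) := by
  obtain ⟨m, rfl⟩ : ∃ m, n = j + m + 2 := ⟨n - j - 2, by omega⟩
  simp_rw [bask_mul_pow]
  exact (integrableOn_pow_div_one_add_pow (k + j) m).const_mul _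

lemma integral_bask_mul_pow {n j : ℕ} (hj : j + 2 ≤ n) (k : ℕ) :
    ∫ t in Ioi (0 : ℝ), bask n k t * t ^ j
      = (ascPochhammer ℝ j).eval ((k : ℝ) + 1) / (descPochhammer ℝ (j + 1)).eval ((n : ℝ) - 1) := by
  obtain ⟨m, rfl⟩ : ∃ m, n = j + m + 2 := ⟨n - j - 2, by omega⟩
  simp_rw [bask_mul_pow]
  rw [integral_const_mul, integral_pow_div_one_add_pow,
    show ((j + m + 2 : ℕ) : ℝ) - 1 = ((j + m + 1 : ℕ) : ℝ) by push_cast; ring,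
    descPochhammer_eval_eq_descFactorial, show (k : ℝ) + 1 = ((k + 1 : ℕ) : ℝ) by push_cast; ring,
    ← ascPochhammer_eval_cast, ascPochhammer_nat_eq_ascFactorial]
  have hasc := Nat.factorial_mul_ascFactorial k j
  have hdesc := Nat.factorial_mul_descFactorial (show j + 1 ≤ j + m + 1 by omega)
  have hchoose := Nat.add_choose_mul_factorial_mul_factorial k (j + m + 1)
  rw [show j + m + 1 - (j + 1) = m by omega] at hdesc
  have hC : ((k + (j + m + 1)).choose (j + m + 1) : ℝ) ≠ 0 :=
    Nat.cast_ne_zero.2 (Nat.choose_pos (by omega)).ne'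
  rw [show k + j + m + 1 = k + (j + m + 1) by ring, ← hchoose, ← hasc, ← hdesc,
    Nat.choose_symm_add]
  push_cast
  field_simp

lemma integral_bask_mul_sub_pow {n m : ℕ} (hm : m + 2 ≤ n) (k : ℕ) (x : ℝ) :
    ∫ t in Ioi (0 : ℝ), bask n k t * (t - x) ^ m
      = ∑ j ∈ range (m + 1), (-x) ^ (m - j) * m.choose j
          / (descPochhammer ℝ (j + 1)).eval ((n : ℝ) - 1)
          * (ascPochhammer ℝ j).eval ((k : ℝ) + 1) := by
  have hexp : ∀ t, bask n k t * (t - x) ^ m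
      = ∑ j ∈ range (m + 1), (-x) ^ (m - j) * m.choose j * (bask n k t * t ^ j) := fun t => by
    rw [sub_eq_add_neg, add_pow, mul_sum]
    exact sum_congr rfl fun j _ => by ring
  simp_rw [hexp]
  rw [integral_finsetSum _ fun j hj => (integrableOn_bask_mul_pow
    (by have := mem_range.1 hj; omega) k).const_mul _]
  refine sum_congr rfl fun j hj => ?_
  rw [integral_const_mul, integral_bask_mul_pow (by have := mem_range.1 hj; omega)]
  ring

lemma fwdDiff_iter_eq_zero_of_le {M G : Type*} [AddCommMonoid M] [AddCommGroup G] {h : M}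
    {f : M → G} {d : ℕ} (hf : (fwdDiff h)^[d] f = 0) {r : ℕ} (hr : d ≤ r) :
    (fwdDiff h)^[r] f = 0 := by
  obtain ⟨j, rfl⟩ := Nat.exists_eq_add_of_le hr
  rw [add_comm, Function.iterate_add_apply, hf]
  exact Function.iterate_fixed (fwdDiff_const h (0 : G)) j

lemma eq_sum_choose_mul_fwdDiff_iter {f : ℝ → ℝ} {d : ℕ} (hf : (fwdDiff 1)^[d + 1] f = 0)
    (k : ℕ) :
    f k = ∑ r ∈ range (d + 1), k.choose r * (fwdDiff 1)^[r] f 0 := by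
  have hnewton := shift_eq_sum_fwdDiff_iter 1 f k 0
  rw [zero_add, nsmul_one] at hnewton
  rw [hnewton, sum_subset (range_subset_range.2 (Nat.le_add_right (k + 1) d)) fun r _ hr => by
      rw [Nat.choose_eq_zero_of_lt (by simpa using hr), zero_smul],
    ← sum_subset (range_subset_range.2 (by omega : d + 1 ≤ k + 1 + d)) fun r _ hr => by
      rw [fwdDiff_iter_eq_zero_of_le hf (by simpa using hr), Pi.zero_apply, smul_zero]]
  simp only [nsmul_eq_mul]

open Polynomial in
lemma fwdDiff_iter_sum_mul_ascPochhammer_eval_add_eq_zero (m : ℕ) (a : ℕ → ℝ) (c : ℝ) :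
    (fwdDiff 1)^[m + 1] (fun y : ℝ => ∑ j ∈ range (m + 1), a j * (ascPochhammer ℝ j).eval (y + c))
      = 0 := by
  let P : ℝ[X] := ∑ j ∈ range (m + 1), C (a j) * (ascPochhammer ℝ j).comp (X + C c)
  have hP : P.natDegree < m + 1 := by
    refine Nat.lt_succ_of_le (natDegree_sum_le_of_forall_le _ _ fun j hj => ?_)
    refine (natDegree_C_mul_le _ _).trans ?_
    rw [natDegree_comp, ascPochhammer_natDegree, natDegree_X_add_C, mul_one]
    exact Nat.lt_succ_iff.1 (mem_range.1 hj)
  convert fwdDiff_iter_eq_zero_of_degree_lt hP using 2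
  funext y
  simp [P, eval_finsetSum]

lemma hasSum_bask {N : ℕ} (hN : N ≠ 0) {x : ℝ} (hx : 0 ≤ x) : HasSum (fun k => bask N k x) 1 := by
  have h1x : 0 < 1 + x := by linarith
  have hq : ‖x / (1 + x)‖ < 1 := by
    rw [Real.norm_of_nonneg (by positivity), div_lt_one h1x]
    linarith
  have h := (hasSum_choose_mul_geometric_of_norm_lt_one (N - 1) hq).mul_left ((1 + x) ^ N)⁻¹
  rw [show 1 - x / (1 + x) = (1 + x)⁻¹ by field_simp; ring, Nat.sub_add_cancel
    (Nat.one_le_iff_ne_zero.2 hN), inv_pow, one_div, inv_inv, inv_mul_cancel₀ (by positivity)] at h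
  refine h.congr_fun fun k => ?_
  rw [bask, show N + k - 1 = k + (N - 1) by omega, Nat.choose_symm_add, pow_add, div_pow]
  field_simp

lemma bask_add_mul_choose (N k r : ℕ) (x : ℝ) :
    bask N (k + r) x * (k + r).choose r = (N + r - 1).choose r * x ^ r * bask (N + r) k x := by
  have hchoose := Nat.choose_mul (n := N + (k + r) - 1) (k := k + r) (s := k) (by omega)
  rw [Nat.choose_symm_add, show N + (k + r) - 1 - k = N + r - 1 by omega,
    show k + r - k = r by omega] at hchoose
  rw [bask, bask, show N + r + k - 1 = N + (k + r) - 1 by omega,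
    show N + r + k = N + (k + r) by omega]
  have := congrArg (Nat.cast : ℕ → ℝ) hchoose
  push_cast at this
  rw [pow_add]
  linear_combination (x ^ k * x ^ r / (1 + x) ^ (N + (k + r))) * this

lemma hasSum_bask_mul_choose {N : ℕ} (hN : N ≠ 0) {x : ℝ} (hx : 0 ≤ x) (r : ℕ) :
    HasSum (fun k => bask N k x * k.choose r) ((ascPochhammer ℝ r).eval (N : ℝ) / r ! * x ^ r) := by
  have hchoose : ((N + r - 1).choose r : ℝ) = (ascPochhammer ℝ r).eval (N : ℝ) / r ! := by
    rw [← ascPochhammer_eval_cast, ascPochhammer_nat_eq_ascFactorial,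
      Nat.ascFactorial_eq_factorial_mul_choose']
    push_cast
    field_simp
  rw [← hchoose, ← hasSum_nat_add_iff' r, sum_eq_zero fun i hi => by
    rw [Nat.choose_eq_zero_of_lt (mem_range.1 hi), Nat.cast_zero, mul_zero], sub_zero]
  simpa only [bask_add_mul_choose, mul_one] using (hasSum_bask (by omega) hx).mul_left _

lemma hasSum_bask_mul_of_fwdDiff_iter_eq_zero {N : ℕ} (hN : N ≠ 0) {x : ℝ} (hx : 0 ≤ x)
    {f : ℝ → ℝ} {d : ℕ} (hf : (fwdDiff 1)^[d + 1] f = 0) :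
    HasSum (fun k => bask N k x * f k)
      (∑ r ∈ range (d + 1),
        (fwdDiff 1)^[r] f 0 * ((ascPochhammer ℝ r).eval (N : ℝ) / r ! * x ^ r)) := by
  refine (hasSum_sum fun r _ =>
    (hasSum_bask_mul_choose hN hx r).mul_left ((fwdDiff 1)^[r] f 0)).congr_fun fun k => ?_
  rw [eq_sum_choose_mul_fwdDiff_iter hf k, mul_sum]
  exact sum_congr rfl fun r _ => by ring

lemma hasSum_ite_lt_mul {u f : ℕ → ℝ} {a : ℝ} (j : ℕ) (h : HasSum (fun k => u k * f (k + j)) a) :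
    HasSum (fun k => (if k < j then 0 else u (k - j)) * f k) a := by
  rw [← hasSum_nat_add_iff' j, sum_eq_zero fun i hi => by simp [mem_range.1 hi], sub_zero]
  simpa using h

lemma hasSum_p2_mul {n : ℕ} {x : ℝ} {f : ℕ → ℝ} {a b c : ℝ}
    (ha : HasSum (fun k => bask (n + 2) k x * f k) a)
    (hb : HasSum (fun k => bask (n + 2) k x * f (k + 1)) b)
    (hc : HasSum (fun k => bask (n + 2) k x * f (k + 2)) c) :
    HasSum (fun k => p2 n k x * f k)
      ((3 / 2 + 2 * x - n * x * (1 + x)) * a + 2 * n * x * (1 + x) * b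
        + (-(1 / 2) - 2 * x - n * x * (1 + x)) * c) := by
  have hb' := hasSum_ite_lt_mul 1 hb
  have hc' := hasSum_ite_lt_mul 2 hc
  simp only [Nat.lt_one_iff] at hb'
  refine ((ha.mul_left _).add (hb'.mul_left _) |>.add (hc'.mul_left _)).congr_fun fun k => ?_
  simp only [p2]
  ring

lemma hasSum_p2_mul_of_fwdDiff_iter_eq_zero {n : ℕ} {x : ℝ} (hx : 0 ≤ x) {f : ℝ → ℝ} {d : ℕ}
    (hf : (fwdDiff 1)^[d + 1] f = 0) :
    HasSum (fun k => p2 n k x * f k)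
      (∑ r ∈ range (d + 1), ((3 / 2 + 2 * x - n * x * (1 + x)) * (fwdDiff 1)^[r] f 0
          + 2 * n * x * (1 + x) * (fwdDiff 1)^[r] f 1
          + (-(1 / 2) - 2 * x - n * x * (1 + x)) * (fwdDiff 1)^[r] f 2)
        * ((ascPochhammer ℝ r).eval ((n : ℝ) + 2) / r ! * x ^ r)) := by
  have hshift : ∀ m : ℕ, HasSum (fun k => bask (n + 2) k x * f ↑(k + m))
      (∑ r ∈ range (d + 1),
        (fwdDiff 1)^[r] f m * ((ascPochhammer ℝ r).eval ((n : ℝ) + 2) / r ! * x ^ r)) := fun m => by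
    have hfm : (fwdDiff 1)^[d + 1] (fun y => f (y + m)) = 0 := funext fun y => by
      rw [fwdDiff_iter_comp_add, hf, Pi.zero_apply, Pi.zero_apply]
    convert hasSum_bask_mul_of_fwdDiff_iter_eq_zero (N := n + 2) (by omega) hx hfm using 1
    · push_cast
      rfl
    · simp only [fwdDiff_iter_comp_add, zero_add]
      push_cast
      rfl
  convert hasSum_p2_mul (f := fun k => f k) (hshift 0) (hshift 1) (hshift 2) using 1
  simp only [Nat.cast_zero, Nat.cast_one, Nat.cast_ofNat, mul_sum, ← sum_add_distrib]
  exact sum_congr rfl fun r _ => by ring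

theorem V2_central_moment_four (n : ℕ) (hn : 6 ≤ n) (x : ℝ) (hx : 0 ≤ x) :
    V2 n (fun t => (t - x) ^ 4) x =
      (1 / (((n : ℝ) - 2) * ((n : ℝ) - 3) * ((n : ℝ) - 4) * ((n : ℝ) - 5))) *
        ((n : ℝ) ^ 2 * (-12 * x ^ 2 - 24 * x ^ 3 - 12 * x ^ 4)
          + (n : ℝ) * (-156 * x - 816 * x ^ 2 - 1320 * x ^ 3 - 660 * x ^ 4)
          - 144 - 1284 * x - 4068 * x ^ 2 - 5568 * x ^ 3 - 2784 * x ^ 4) := by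
  have hpoly := fwdDiff_iter_sum_mul_ascPochhammer_eval_add_eq_zero 4
    (fun j => (-x) ^ (4 - j) * (4 : ℕ).choose j / (descPochhammer ℝ (j + 1)).eval ((n : ℝ) - 1)) 1
  simp only [V2, integral_bask_mul_sub_pow (show 4 + 2 ≤ n by omega),
    (hasSum_p2_mul_of_fwdDiff_iter_eq_zero hx hpoly).tsum_eq]
  norm_num only [fwdDiff_iter_eq_sum_shift, sum_range_succ, sum_range_zero, ascPochhammer_zero,
    descPochhammer_zero, ascPochhammer_succ_eval, descPochhammer_succ_eval, Polynomial.eval_one,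
    Nat.choose_succ_succ, Nat.choose_zero_right, Nat.choose_zero_succ, Nat.factorial, sub_sub,
    zsmul_eq_mul, nsmul_eq_mul, zero_add, add_zero, one_mul, mul_one]
  have hn' : (6 : ℝ) ≤ n := by exact_mod_cast hn
  obtain ⟨h1, h2, h3, h4, h5⟩ : (n : ℝ) - 1 ≠ 0 ∧ (n : ℝ) - 2 ≠ 0 ∧ (n : ℝ) - 3 ≠ 0 ∧
      (n : ℝ) - 4 ≠ 0 ∧ (n : ℝ) - 5 ≠ 0 := by
    refine ⟨?_, ?_, ?_, ?_, ?_⟩ <;> linarith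
  field_simp
  ring
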